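/- arXiv:1103.3069 — 6 statements merged into one kernel-verified Lean document; each statement's English description precedes it below -/
import Mathlib

section
/- Let L be a free abelian group of finite rank, J a divisible abelian group, δ : L → J a group homomorphism, and n a positive integer. Let F_n := {(j, l) ∈ J × L : n·j = δ(l)} be the fiber product of the multiplication-by-n map J → J with δ. Then the sequence 0 → J[n] → F_n ⊗_ℤ ℤ/nℤ → L ⊗_ℤ ℤ/nℤ → 0 is exact, where the first map sends x ∈ J[n] to (x, 0) ⊗ 1 and the second map is induced by the projection (j, l) ↦ l. -/
/-!
The projection `F → L` is onto because `J` is divisible, and its kernel is `{(x, 0) | x ∈ J[n]}`,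
so `0 → J[n] → F → L → 0` is exact; it splits because `L` is free. Tensoring with `ℤ/nℤ` keeps a
split short exact sequence split exact, and `J[n] → J[n] ⊗ ℤ/nℤ`, `x ↦ x ⊗ 1`, is an isomorphism
because `n` kills `J[n]`.
-/

open TensorProduct

section FiberProduct

variable {R J L : Type*} [CommRing R] [AddCommGroup J] [Module R J] [AddCommGroup L] [Module R L]
  {a : R} {δ : L →ₗ[R] J} {F : Submodule R (J × L)}

def torsionByToFiber (hF : ∀ x : J × L, x ∈ F ↔ a • x.1 = δ x.2) :
    Submodule.torsionBy R J a →ₗ[R] F :=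
  LinearMap.codRestrict F ((LinearMap.inl R J L).comp (Submodule.torsionBy R J a).subtype)
    fun x => (hF _).mpr (by simp)

theorem snd_comp_subtype_surjective_of_divisible (hF : ∀ x : J × L, x ∈ F ↔ a • x.1 = δ x.2)
    (hdiv : ∀ y : J, ∃ x, a • x = y) :
    Function.Surjective ((LinearMap.snd R J L).comp F.subtype) := by
  intro l
  obtain ⟨j, hj⟩ := hdiv (δ l)
  exact ⟨⟨(j, l), (hF _).mpr hj⟩, rfl⟩

variable (hF : ∀ x : J × L, x ∈ F ↔ a • x.1 = δ x.2)

@[simp]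
theorem torsionByToFiber_apply (x : Submodule.torsionBy R J a) :
    (torsionByToFiber hF x : J × L) = ((x : J), 0) := rfl

theorem torsionByToFiber_injective : Function.Injective (torsionByToFiber hF) := by
  intro x y hxy
  simpa using congrArg (fun f : F => (f : J × L).1) hxy

theorem exact_torsionByToFiber_snd :
    Function.Exact (torsionByToFiber hF) ((LinearMap.snd R J L).comp F.subtype) := by
  rintro ⟨⟨j, l⟩, hjl⟩
  constructor
  · intro (hl : l = 0)
    subst hl
    refine ⟨⟨j, ?_⟩, rfl⟩
    simpa using (hF _).mp hjl
  · rintro ⟨x, hx⟩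
    rw [← hx]
    rfl

end FiberProduct

theorem LinearMap.rTensor_injective_of_exact_of_projective {R M N P : Type*} [CommRing R]
    [AddCommGroup M] [AddCommGroup N] [AddCommGroup P] [Module R M] [Module R N] [Module R P]
    [Module.Projective R P] (Q : Type*) [AddCommGroup Q] [Module R Q]
    {f : M →ₗ[R] N} {g : N →ₗ[R] P} (hfg : Function.Exact f g) (hf : Function.Injective f)
    (hg : Function.Surjective g) : Function.Injective (f.rTensor Q) := by
  obtain ⟨s, hs⟩ := Module.projective_lifting_property g LinearMap.id hg
  have hsplit := (hfg.split_tfae hf hg).out 0 1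
  obtain ⟨r, hr⟩ := hsplit.mp ⟨s, hs⟩
  refine Function.LeftInverse.injective (g := r.rTensor Q) fun x => ?_
  rw [← LinearMap.comp_apply, ← LinearMap.rTensor_comp, hr, LinearMap.rTensor_id, LinearMap.id_apply]

section ZModTensor

variable {M : Type*} [AddCommGroup M] (n : ℕ)

theorem tmul_one_zmod_surjective :
    Function.Surjective ((mk ℤ M (ZMod n)).flip 1) := by
  intro t
  induction t using TensorProduct.induction_on with
  | zero => exact ⟨0, by simp⟩
  | tmul x c =>
    obtain ⟨k, rfl⟩ := ZMod.intCast_surjective c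
    exact ⟨k • x, by rw [LinearMap.flip_apply, mk_apply, smul_tmul, zsmul_one]⟩
  | add s t hs ht =>
    obtain ⟨x, rfl⟩ := hs
    obtain ⟨y, rfl⟩ := ht
    exact ⟨x + y, map_add _ x y⟩

theorem tmul_one_zmod_injective (h : ∀ x : M, n • x = 0) :
    Function.Injective ((mk ℤ M (ZMod n)).flip 1) := by
  let := AddCommGroup.zmodModule h
  refine Function.LeftInverse.injective
    (g := lift (LinearMap.restrictScalars₁₂ ℤ ℤ (LinearMap.lsmul (ZMod n) M).flip)) fun x => ?_
  simp

end ZModTensor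

/-- Let `L` be a free abelian group of finite rank, `J` a divisible
abelian group, `δ : L → J` a homomorphism and `n ≥ 1`.  Let `F` be the fiber product
`{(j, l) ∈ J × L | n•j = δ(l)}` of multiplication-by-`n` on `J` with `δ`.  Then
`0 → J[n] → F ⊗ ℤ/nℤ → L ⊗ ℤ/nℤ → 0` is exact, where the first map sends `x` to
`(x, 0) ⊗ 1` and the second is induced by the projection `(j, l) ↦ l`. -/
theorem one_motive_torsion_sequence_exact
    (L J : Type) [AddCommGroup L] [AddCommGroup J]
    [Module.Free ℤ L] [DivisibleBy J ℤ]
    (δ : L →ₗ[ℤ] J) (n : ℕ) (hn : 0 < n)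
    (F : Submodule ℤ (J × L))
    (hF : ∀ x : J × L, x ∈ F ↔ (n : ℤ) • x.1 = δ x.2)
    (i : Submodule.torsionBy ℤ J (n : ℤ) →ₗ[ℤ] F ⊗[ℤ] ZMod n)
    (hi : ∀ x : Submodule.torsionBy ℤ J (n : ℤ),
      i x = (⟨((x : J), 0),
        (hF _).mpr (by simp only [map_zero]; exact ((Submodule.mem_torsionBy_iff (n : ℤ) (x : J)).mp x.2))⟩ :
          F) ⊗ₜ[ℤ] (1 : ZMod n))
    (q : F ⊗[ℤ] ZMod n →ₗ[ℤ] L ⊗[ℤ] ZMod n)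
    (hq : q = TensorProduct.map ((LinearMap.snd ℤ J L).comp F.subtype) LinearMap.id) :
    Function.Injective i ∧ Function.Exact i q ∧ Function.Surjective q := by
  have hdiv (y : J) : ∃ x : J, (n : ℤ) • x = y :=
    ⟨DivisibleBy.div y (n : ℤ), DivisibleBy.div_cancel y (by exact_mod_cast hn.ne')⟩
  have hexact := exact_torsionByToFiber_snd hF
  have hsurj := snd_comp_subtype_surjective_of_divisible hF hdiv
  have hi' : i = (torsionByToFiber hF).rTensor (ZMod n) ∘ₗ (mk ℤ _ (ZMod n)).flip 1 :=
    LinearMap.ext hi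
  subst hi' hq
  refine ⟨?_, ?_, LinearMap.rTensor_surjective _ hsurj⟩
  · exact (LinearMap.rTensor_injective_of_exact_of_projective _ hexact
      (torsionByToFiber_injective hF) hsurj).comp
      (tmul_one_zmod_injective n fun x => by simp [← natCast_zsmul])
  · exact ((tmul_one_zmod_surjective n).comp_exact_iff_exact).mpr
      (rTensor_exact _ hexact hsurj)
end

section
/- Let p be a prime, G a finite p-group, and T a module over the group ring ℤ_p[G] which is free of finite rank as a ℤ_p-module. If the 𝔽_p[G]-module T/pT is free, then T is a free ℤ_p[G]-module, of rank equal to the rank of T/pT over 𝔽_p[G]. -/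
/-
Lift an `𝔽_p[G]`-basis of `T/pT` to elements `t i` of `T`. By Nakayama's lemma over `ℤ_p`
(`T` is finitely generated) the `t i` generate `T`. If `∑ cᵢ tᵢ = 0`, reducing mod `p` shows that
all `cᵢ` are divisible by `p`; since `T` has no `p`-torsion the quotients are again a relation,
so the coefficients lie in `⋂ₖ pᵏ ℤ_p[G]`, which is zero by Krull's intersection theorem.
-/

/-- Multiplication by `n` as an `R`-linear endomorphism. -/
def natMulLinear (R : Type) [Ring R] (T : Type) [AddCommGroup T] [Module R T]
    (n : ℕ) : T →ₗ[R] T where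
  toFun x := n • x
  map_add' x y := smul_add n x y
  map_smul' r x := smul_comm n r x

/-- The reduction `T/pT` of a `ℤ_p[G]`-module `T`. -/
abbrev ModPQuot (p : ℕ) [Fact p.Prime] (G : Type) [Group G]
    (T : Type) [AddCommGroup T] [Module (MonoidAlgebra ℤ_[p] G) T] :=
  T ⧸ LinearMap.range (natMulLinear (MonoidAlgebra ℤ_[p] G) T p)

open PadicInt IsLocalRing Pointwise

theorem LinearMap.injective_of_ker_le_smul_top {Λ M N : Type*} [CommRing Λ] [AddCommGroup M]
    [Module Λ M] [AddCommGroup N] [Module Λ N] {I : Ideal Λ} [IsHausdorff I M] {π : Λ}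
    (hπI : π ∈ I) (hπ : IsSMulRegular N π) (f : M →ₗ[Λ] N)
    (hker : LinearMap.ker f ≤ π • ⊤) : Function.Injective f := by
  have hpow : ∀ k : ℕ, LinearMap.ker f ≤ I ^ k • ⊤ := by
    intro k
    induction k with
    | zero => simp
    | succ k ih =>
      intro x hx
      obtain ⟨y, -, rfl⟩ := (Submodule.mem_smul_pointwise_iff_exists _ _ _).1 (hker hx)
      have hy : f y = 0 := hπ (by simpa using hx)
      rw [pow_succ', Submodule.mul_smul]
      exact Submodule.smul_mem_smul hπI (ih hy)
  rw [← LinearMap.ker_eq_bot, Submodule.eq_bot_iff]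
  exact fun x hx => IsHausdorff.haus ‹_› x fun k => SModEq.zero.2 (hpow k hx)

theorem Submodule.eq_top_of_sup_eq_top_of_le_smul_top {Λ R T : Type*} [CommRing Λ] [Semiring R]
    [SMul Λ R] [AddCommGroup T] [Module R T] [Module Λ T] [IsScalarTower Λ R T]
    [Module.Finite Λ T] {I : Ideal Λ} (hI : I ≤ Ideal.jacobson ⊥) {N P : Submodule R T}
    (hP : P.restrictScalars Λ ≤ I • ⊤) (hNP : N ⊔ P = ⊤) : N = ⊤ := by
  rw [← Submodule.restrictScalars_eq_top_iff Λ, eq_top_iff]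
  refine Submodule.le_of_le_smul_of_le_jacobson_bot Module.Finite.fg_top hI ?_
  calc ⊤ = (N ⊔ P).restrictScalars Λ := by rw [hNP, Submodule.restrictScalars_top]
    _ = N.restrictScalars Λ ⊔ P.restrictScalars Λ := Submodule.restrictScalars_sup _ _ _
    _ ≤ _ := sup_le_sup_left hP _

theorem range_natMulLinear_le_smul_top {Λ R T : Type} [CommRing Λ] [Ring R] [SMul Λ R]
    [AddCommGroup T] [Module R T] [Module Λ T] [IsScalarTower Λ R T] {n : ℕ} {I : Ideal Λ}
    (hn : (n : Λ) ∈ I) : (LinearMap.range (natMulLinear R T n)).restrictScalars Λ ≤ I • ⊤ := by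
  rintro _ ⟨z, rfl⟩
  rw [show natMulLinear R T n z = (n : Λ) • z from (Nat.cast_smul_eq_nsmul Λ n z).symm]
  exact Submodule.smul_mem_smul hn trivial

section CompatibleActions

variable {ι R S M : Type*} [Ring R] [Ring S] [AddCommGroup M] [Module R M] [Module S M]

theorem Module.Basis.span_eq_top_of_map_smul {φ : R →+* S} (hφ : Function.Surjective φ)
    (hsmul : ∀ (a : R) (x : M), φ a • x = a • x) (b : Module.Basis ι S M) :
    Submodule.span R (Set.range b) = ⊤ := by
  refine Submodule.eq_top_iff'.2 fun x => ?_
  induction b.mem_span x using Submodule.span_induction with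
  | mem y hy => exact Submodule.subset_span hy
  | zero => exact Submodule.zero_mem _
  | add y z _ _ hy hz => exact Submodule.add_mem _ hy hz
  | smul s y _ hy =>
    obtain ⟨a, rfl⟩ := hφ s
    rw [hsmul]
    exact Submodule.smul_mem _ a hy

theorem Module.Basis.map_eq_zero_of_sum_smul_eq_zero [Fintype ι] {φ : R →+* S}
    (hsmul : ∀ (a : R) (x : M), φ a • x = a • x) (b : Module.Basis ι S M) {c : ι → R}
    (hc : ∑ i, c i • b i = 0) (i : ι) : φ (c i) = 0 := by
  refine Fintype.linearIndependent_iff.1 b.linearIndependent (fun i => φ (c i)) ?_ i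
  simpa only [hsmul] using hc

end CompatibleActions

theorem MonoidAlgebra.mapRingHom_smul_eq_smul {R S G M : Type*} [Semiring R] [Semiring S]
    [Monoid G] [AddCommMonoid M] [Module (MonoidAlgebra R G) M] [Module (MonoidAlgebra S G) M]
    (f : R →+* S) (h : ∀ (c : R) (g : G) (x : M), single g (f c) • x = single g c • x)
    (a : MonoidAlgebra R G) (x : M) : mapRingHom G f a • x = a • x := by
  induction a using MonoidAlgebra.induction_linear with
  | zero => simp only [map_zero, zero_smul]
  | add a a' ha ha' => simp only [map_add, add_smul, ha, ha']
  | single g c => rw [mapRingHom_single, h]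

theorem MonoidAlgebra.exists_eq_smul_of_dvd_coeff {R G : Type*} [Semiring R] {r : R}
    {a : MonoidAlgebra R G} (h : ∀ g, r ∣ a.coeff g) : ∃ a' : MonoidAlgebra R G, a = r • a' := by
  classical
  choose d hd using h
  refine ⟨ofCoeff (Finsupp.onFinset a.coeff.support
    (fun g => if g ∈ a.coeff.support then d g else 0) fun g hg => ?_), ?_⟩
  · by_contra h
    exact hg (if_neg h)
  · ext g
    by_cases hg : g ∈ a.coeff.support
    · simp [← hd]
    · simp_all

theorem PadicInt.exists_eq_p_smul_of_mapRingHom_toZMod_eq_zero {p : ℕ} [Fact p.Prime]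
    {G : Type*} [Monoid G] {a : MonoidAlgebra ℤ_[p] G}
    (ha : MonoidAlgebra.mapRingHom G toZMod a = 0) : ∃ a', a = (p : ℤ_[p]) • a' := by
  refine MonoidAlgebra.exists_eq_smul_of_dvd_coeff fun g => ?_
  have hg : toZMod (a.coeff g) = 0 := by
    rw [← MonoidAlgebra.coeff_mapRingHom, ha, MonoidAlgebra.coeff_zero, Finsupp.zero_apply]
  rwa [← RingHom.mem_ker, ker_toZMod, maximalIdeal_eq_span_p, Ideal.mem_span_singleton] at hg

theorem free_over_padic_group_ring_of_free_mod_p_general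
    (p : ℕ) [Fact p.Prime] (G : Type) [Group G] [Finite G]
    (T : Type) [AddCommGroup T] [Module (MonoidAlgebra ℤ_[p] G) T]
    [Module ℤ_[p] T] [IsScalarTower ℤ_[p] (MonoidAlgebra ℤ_[p] G) T]
    [Module.Free ℤ_[p] T] [Module.Finite ℤ_[p] T]
    [Module (MonoidAlgebra (ZMod p) G) (ModPQuot p G T)]
    (hcompat : ∀ (c : ℤ_[p]) (g : G) (x : ModPQuot p G T),
      (MonoidAlgebra.single g (PadicInt.toZMod c) : MonoidAlgebra (ZMod p) G) • x =
      (MonoidAlgebra.single g c : MonoidAlgebra ℤ_[p] G) • x)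
    (n : ℕ)
    (hfree : Nonempty (Module.Basis (Fin n) (MonoidAlgebra (ZMod p) G) (ModPQuot p G T))) :
    Nonempty (Module.Basis (Fin n) (MonoidAlgebra ℤ_[p] G) T) := by
  obtain ⟨b⟩ := hfree
  set P := LinearMap.range (natMulLinear (MonoidAlgebra ℤ_[p] G) T p)
  have hsmul := MonoidAlgebra.mapRingHom_smul_eq_smul toZMod hcompat
  have hp : (p : ℤ_[p]) ∈ maximalIdeal ℤ_[p] := (mem_maximalIdeal _).2 prime_p.not_isUnit
  choose t ht using fun i => P.mkQ_surjective (b i)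
  have hspan : Submodule.span (MonoidAlgebra ℤ_[p] G) (Set.range t) = ⊤ := by
    refine Submodule.eq_top_of_sup_eq_top_of_le_smul_top (maximalIdeal_le_jacobson ⊥)
      (range_natMulLinear_le_smul_top hp) ?_
    rw [sup_comm, ← Submodule.map_mkQ_eq_top, Submodule.map_span, ← Set.range_comp,
      show P.mkQ ∘ t = b from funext ht]
    exact b.span_eq_top_of_map_smul (MonoidAlgebra.map_surjective _ (ZMod.ringHom_surjective _))
      hsmul
  have hli : LinearIndependent (MonoidAlgebra ℤ_[p] G) t := by
    rw [linearIndependent_iff_injective_fintypeLinearCombination]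
    -- `ℤ_p[G]ⁿ` is finite over `ℤ_p` since `G` is, so Krull separates it `p`-adically.
    refine LinearMap.injective_of_ker_le_smul_top hp (IsSMulRegular.of_ne_zero prime_p.ne_zero)
      ((Fintype.linearCombination (MonoidAlgebra ℤ_[p] G) t).restrictScalars ℤ_[p]) fun c hc => ?_
    have hsum : ∑ i, c i • b i = 0 := by
      simpa only [LinearMap.restrictScalars_apply, Fintype.linearCombination_apply, map_sum,
        map_smul, ht, map_zero] using congrArg P.mkQ (LinearMap.mem_ker.1 hc)
    have hred := b.map_eq_zero_of_sum_smul_eq_zero hsmul hsum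
    choose c' hc' using fun i => exists_eq_p_smul_of_mapRingHom_toZMod_eq_zero (hred i)
    exact (Submodule.mem_smul_pointwise_iff_exists _ _ _).2 ⟨c', trivial, (funext hc').symm⟩
  exact ⟨Module.Basis.mk hli hspan.ge⟩

/-- Let `G` be a finite `p`-group and `T` a `ℤ_p[G]`-module which is
free of finite rank over `ℤ_p`.  If the `𝔽_p[G]`-module `T/pT` is free (of rank `n`),
then `T` is a free `ℤ_p[G]`-module of the same rank `n`. -/
theorem free_over_padic_group_ring_of_free_mod_p
    (p : ℕ) [Fact p.Prime] (G : Type) [Group G] [Finite G] (hG : IsPGroup p G)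
    (T : Type) [AddCommGroup T] [Module (MonoidAlgebra ℤ_[p] G) T]
    [Module ℤ_[p] T] [IsScalarTower ℤ_[p] (MonoidAlgebra ℤ_[p] G) T]
    [Module.Free ℤ_[p] T] [Module.Finite ℤ_[p] T]
    [Module (MonoidAlgebra (ZMod p) G) (ModPQuot p G T)]
    (hcompat : ∀ (c : ℤ_[p]) (g : G) (x : ModPQuot p G T),
      (MonoidAlgebra.single g (PadicInt.toZMod c) : MonoidAlgebra (ZMod p) G) • x =
      (MonoidAlgebra.single g c : MonoidAlgebra ℤ_[p] G) • x)
    (n : ℕ)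
    (hfree : Nonempty (Module.Basis (Fin n) (MonoidAlgebra (ZMod p) G) (ModPQuot p G T))) :
    Nonempty (Module.Basis (Fin n) (MonoidAlgebra ℤ_[p] G) T) :=
  free_over_padic_group_ring_of_free_mod_p_general p G T hcompat n hfree
end

section
/- Let p be a prime, G a finite abelian group, and M a ℤ_p[G]-module which is free of finite rank as a ℤ_p-module, equipped with a ℤ_p[G]-linear automorphism γ such that M_Γ := M/(γ − 1)M is finite. Let M* := Hom_{ℤ_p}(M, ℤ_p), endowed with the contravariant actions (g·f)(x) := f(g^{-1}x) for g ∈ G and (γ·f)(x) := f(γ^{-1}x), and let (M*)_Γ := M*/(γ − 1)M*. Then there is an isomorphism of ℤ_p[G]-modules Hom_{ℤ_p}(M_Γ, ℚ_p/ℤ_p) ≅ (M*)_Γ, where the Pontrjagin dual Hom_{ℤ_p}(M_Γ, ℚ_p/ℤ_p) carries the contravariant G-action (g·f)(x) := f(g^{-1}x). -/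
/-- The Prüfer group `ℚ_p/ℤ_p`, realized as the quotient of `ℚ_p` by `ℤ_p`. -/
noncomputable abbrev PruferModule (p : ℕ) [Fact p.Prime] :=
  ℚ_[p] ⧸ LinearMap.range (Algebra.linearMap ℤ_[p] ℚ_[p])

section

variable (p : ℕ) [Fact p.Prime] (G : Type) [CommGroup G] [Finite G]
  (M : Type) [AddCommGroup M] [Module ℤ_[p] M]
  [Module (MonoidAlgebra ℤ_[p] G) M] [IsScalarTower ℤ_[p] (MonoidAlgebra ℤ_[p] G) M]

/-- The action of the group element `g ∈ G` on the `ℤ_p[G]`-module `M`, as a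
`ℤ_p`-linear endomorphism. -/
noncomputable def gAct (g : G) : M →ₗ[ℤ_[p]] M :=
  LinearMap.restrictScalars ℤ_[p]
    (LinearMap.lsmul (MonoidAlgebra ℤ_[p] G) M (MonoidAlgebra.single g 1))

variable (γ : M ≃ₗ[MonoidAlgebra ℤ_[p] G] M)

/-- The `Γ`-coinvariants `M_Γ = M/(γ-1)M`. -/
noncomputable abbrev coinvOf :=
  M ⧸ (LinearMap.range (γ.toLinearMap - LinearMap.id)).restrictScalars ℤ_[p]

/-- The action of `g ∈ G` induced on the coinvariants `M_Γ`. -/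
noncomputable def gActQ (g : G) : coinvOf p G M γ →ₗ[ℤ_[p]] coinvOf p G M γ :=
  Submodule.mapQ _ _ (gAct p G M g)
    (fun x hx => by
      obtain ⟨y, rfl⟩ := hx
      refine ⟨(MonoidAlgebra.single g 1 : MonoidAlgebra ℤ_[p] G) • y, ?_⟩
      simp [gAct, LinearMap.sub_apply, smul_sub, map_smul])

/-- The contravariant action `(γ • f)(x) = f(γ⁻¹ • x)` on the `ℤ_p`-dual `M*`. -/
noncomputable def starGamma : (M →ₗ[ℤ_[p]] ℤ_[p]) →ₗ[ℤ_[p]] (M →ₗ[ℤ_[p]] ℤ_[p]) :=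
  LinearMap.lcomp ℤ_[p] ℤ_[p] (LinearMap.restrictScalars ℤ_[p] γ.symm.toLinearMap)

/-- The contravariant action `(g • f)(x) = f(g⁻¹ • x)` of `g ∈ G` on the
`ℤ_p`-dual `M*`. -/
noncomputable def starG (g : G) : (M →ₗ[ℤ_[p]] ℤ_[p]) →ₗ[ℤ_[p]] (M →ₗ[ℤ_[p]] ℤ_[p]) :=
  LinearMap.lcomp ℤ_[p] ℤ_[p] (gAct p G M g⁻¹)

/-- The `Γ`-coinvariants `(M*)_Γ` of the `ℤ_p`-dual `M*` (for the contravariant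
`γ`-action). -/
noncomputable abbrev dualCoinv :=
  (M →ₗ[ℤ_[p]] ℤ_[p]) ⧸ LinearMap.range (starGamma p G M γ - LinearMap.id)

/-- The contravariant action of `g ∈ G` induced on `(M*)_Γ`. -/
noncomputable def starGQ (g : G) : dualCoinv p G M γ →ₗ[ℤ_[p]] dualCoinv p G M γ :=
  Submodule.mapQ _ _ (starG p G M g)
    (fun u hu => by
      obtain ⟨v, rfl⟩ := hu
      refine ⟨starG p G M g v, ?_⟩
      ext x
      simp [starGamma, starG, gAct, LinearMap.sub_apply, map_smul])

end

/-!
Write `T = γ - 1`. Since `M_Γ = coker T` is torsion and `M` is free of finite rank, precomposition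
with `T` is invertible on `Hom(M, ℚ_p)`, so every `φ ∈ M*` is `F ∘ T` for a unique
`F : M → ℚ_p`, and `F` modulo `ℤ_p` kills `T M`. The resulting map `M* → Hom(M_Γ, ℚ_p/ℤ_p)` is the
connecting map of `Hom(-, ℤ_p)` applied to `0 → M → M → M_Γ → 0`, read through
`Ext¹(M_Γ, ℤ_p) ≅ Hom(M_Γ, ℚ_p/ℤ_p)`. It is onto because maps `M → ℚ_p/ℤ_p` lift to `M → ℚ_p`
(`M` is projective), and its kernel consists of the `φ` whose `F` is integral, i.e. of
`T* M* = (γ - 1) M*`. It commutes with precomposition by any endomorphism commuting with `T`, in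
particular with the action of `G`.
-/

open Module LinearMap Submodule

theorem LinearMap.exists_comp_eq_of_range_le {R M N P : Type*} [Semiring R] [AddCommMonoid M]
    [AddCommMonoid N] [AddCommMonoid P] [Module R M] [Module R N] [Module R P]
    {f : N →ₗ[R] P} (hf : Function.Injective f) {g : M →ₗ[R] P} (h : range g ≤ range f) :
    ∃ k : M →ₗ[R] N, f ∘ₗ k = g :=
  ⟨(LinearEquiv.ofInjective f hf).symm.toLinearMap ∘ₗ g.codRestrict _ fun x => h ⟨x, rfl⟩,
    by ext x; simp⟩

theorem LinearEquiv.range_symm_sub_id {R M : Type*} [Ring R] [AddCommGroup M] [Module R M]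
    (e : M ≃ₗ[R] M) :
    range (e.symm.toLinearMap - LinearMap.id) = range (e.toLinearMap - LinearMap.id) := by
  have : e.symm.toLinearMap - LinearMap.id =
      -((e.toLinearMap - LinearMap.id) ∘ₗ e.symm.toLinearMap) := by
    ext x; simp
  rw [this, range_neg, range_comp_of_range_eq_top _ (LinearEquiv.range _)]

theorem Module.isTorsion_of_finite {R Q : Type*} [CommRing R] [IsDomain R] [CharZero R]
    [AddCommGroup Q] [Module R Q] [Finite Q] : IsTorsion R Q := fun x =>
  ⟨⟨Nat.card Q, mem_nonZeroDivisors_of_ne_zero (Nat.cast_ne_zero.mpr Nat.card_pos.ne')⟩, by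
    rw [Submonoid.mk_smul, Nat.cast_smul_eq_nsmul, card_nsmul_eq_zero']⟩

section

variable {R : Type*} (K : Type*) {M : Type*} [CommRing R] [IsDomain R] [Field K] [Algebra R K]
  [FaithfulSMul R K] [AddCommGroup M] [Module R M] (T : M →ₗ[R] M)

theorem lcomp_injective_of_isTorsion_quotient_range (hT : IsTorsion R (M ⧸ range T)) :
    Function.Injective (lcomp K K T : (M →ₗ[R] K) →ₗ[K] M →ₗ[R] K) := by
  refine (injective_iff_map_eq_zero _).mpr fun F hF => LinearMap.ext fun x => ?_
  obtain ⟨⟨a, ha⟩, hax⟩ := @hT (Submodule.Quotient.mk x)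
  obtain ⟨y, hy⟩ : a • x ∈ range T := by
    rwa [Submonoid.mk_smul, ← Submodule.Quotient.mk_smul, Submodule.Quotient.mk_eq_zero] at hax
  have : a • F x = 0 := by rw [← map_smul, ← hy]; exact LinearMap.congr_fun hF y
  rw [Algebra.smul_def, mul_eq_zero] at this
  exact this.resolve_left ((map_ne_zero_iff _ (FaithfulSMul.algebraMap_injective R K)).mpr
    (nonZeroDivisors.ne_zero ha))

variable [Free R M] [Module.Finite R M] (hT : IsTorsion R (M ⧸ range T))

noncomputable def precompEquiv : (M →ₗ[R] K) ≃ₗ[K] M →ₗ[R] K :=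
  .ofInjectiveEndo _ (lcomp_injective_of_isTorsion_quotient_range K T hT)

noncomputable def dualLift : (M →ₗ[R] R) →ₗ[R] M →ₗ[R] K :=
  (precompEquiv K T hT).symm.toLinearMap.restrictScalars R ∘ₗ compRight R (Algebra.linearMap R K)

theorem dualLift_eq_iff {φ : M →ₗ[R] R} {F : M →ₗ[R] K} :
    dualLift K T hT φ = F ↔ F ∘ₗ T = Algebra.linearMap R K ∘ₗ φ :=
  (LinearEquiv.symm_apply_eq _).trans eq_comm

theorem dualLift_comp (φ : M →ₗ[R] R) : dualLift K T hT φ ∘ₗ T = Algebra.linearMap R K ∘ₗ φ :=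
  (dualLift_eq_iff K T hT).mp rfl

theorem dualLift_lcomp (ρ : M →ₗ[R] R) :
    dualLift K T hT (lcomp R R T ρ) = Algebra.linearMap R K ∘ₗ ρ :=
  (dualLift_eq_iff K T hT).mpr (comp_assoc _ _ _)

theorem dualLift_comp_of_comm {h : M →ₗ[R] M} (hh : h ∘ₗ T = T ∘ₗ h) (φ : M →ₗ[R] R) :
    dualLift K T hT (φ ∘ₗ h) = dualLift K T hT φ ∘ₗ h := by
  rw [dualLift_eq_iff, comp_assoc, hh, ← comp_assoc, dualLift_comp, comp_assoc]

noncomputable def dualConnecting :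
    (M →ₗ[R] R) →ₗ[R] (M ⧸ range T) →ₗ[R] K ⧸ range (Algebra.linearMap R K) where
  toFun φ := (range T).liftQ ((range (Algebra.linearMap R K)).mkQ ∘ₗ dualLift K T hT φ) <| by
    rintro _ ⟨y, rfl⟩
    rw [mem_ker, comp_apply, ← comp_apply (g := T), dualLift_comp, mkQ_apply,
      Submodule.Quotient.mk_eq_zero]
    exact mem_range_self _ _
  map_add' φ ψ := by ext; simp
  map_smul' a φ := by ext; simp

theorem dualConnecting_mk (φ : M →ₗ[R] R) (x : M) :
    dualConnecting K T hT φ (Submodule.Quotient.mk x) =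
      Submodule.Quotient.mk (dualLift K T hT φ x) :=
  rfl

theorem ker_dualConnecting : ker (dualConnecting K T hT) = range (lcomp R R T) := by
  have hι := FaithfulSMul.algebraMap_injective R K
  ext φ
  constructor
  · intro hφ
    obtain ⟨ρ, hρ⟩ : ∃ ρ : M →ₗ[R] R, Algebra.linearMap R K ∘ₗ ρ = dualLift K T hT φ := by
      refine exists_comp_eq_of_range_le hι ?_
      rintro _ ⟨x, rfl⟩
      rw [← Submodule.Quotient.mk_eq_zero, ← dualConnecting_mk, mem_ker.mp hφ,
        LinearMap.zero_apply]
    refine ⟨ρ, LinearMap.ext fun x => hι ?_⟩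
    rw [lcomp_apply]
    exact LinearMap.congr_fun (hρ ▸ dualLift_comp K T hT φ) x
  · rintro ⟨ρ, rfl⟩
    refine mem_ker.mpr (linearMap_qext _ (LinearMap.ext fun x => ?_))
    rw [comp_apply, mkQ_apply, dualConnecting_mk, dualLift_lcomp, zero_comp, LinearMap.zero_apply,
      Submodule.Quotient.mk_eq_zero]
    exact mem_range_self _ _

theorem dualConnecting_surjective : Function.Surjective (dualConnecting K T hT) := by
  intro f
  obtain ⟨F, hF⟩ := projective_lifting_property (range (Algebra.linearMap R K)).mkQ
    (f ∘ₗ (range T).mkQ) (mkQ_surjective _)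
  obtain ⟨ρ, hρ⟩ : ∃ ρ : M →ₗ[R] R, Algebra.linearMap R K ∘ₗ ρ = F ∘ₗ T := by
    refine exists_comp_eq_of_range_le (FaithfulSMul.algebraMap_injective R K) ?_
    rintro _ ⟨x, rfl⟩
    rw [← ker_mkQ (range (Algebra.linearMap R K)), mem_ker, comp_apply, ← comp_apply (f := mkQ _),
      hF, comp_apply, mkQ_apply, (Submodule.Quotient.mk_eq_zero _).mpr (mem_range_self T x),
      map_zero]
  refine ⟨ρ, linearMap_qext _ (LinearMap.ext fun x => ?_)⟩
  rw [comp_apply, mkQ_apply, dualConnecting_mk, (dualLift_eq_iff K T hT).mpr hρ.symm, ← mkQ_apply,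
    ← comp_apply (f := mkQ _), hF]

theorem dualConnecting_comp_mk {h : M →ₗ[R] M} (hh : h ∘ₗ T = T ∘ₗ h) (φ : M →ₗ[R] R) (x : M) :
    dualConnecting K T hT (φ ∘ₗ h) (Submodule.Quotient.mk x) =
      dualConnecting K T hT φ (Submodule.Quotient.mk (h x)) := by
  rw [dualConnecting_mk, dualConnecting_mk, dualLift_comp_of_comm K T hT hh]
  rfl

end

section

variable {p : ℕ} [Fact p.Prime] {G : Type} [CommGroup G]
  {M : Type} [AddCommGroup M] [Module ℤ_[p] M]
  [Module (MonoidAlgebra ℤ_[p] G) M] [IsScalarTower ℤ_[p] (MonoidAlgebra ℤ_[p] G) M]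
  (γ : M ≃ₗ[MonoidAlgebra ℤ_[p] G] M)

theorem gAct_comp_sub_id (g : G) :
    gAct p G M g ∘ₗ (γ.toLinearMap - LinearMap.id).restrictScalars ℤ_[p] =
      (γ.toLinearMap - LinearMap.id).restrictScalars ℤ_[p] ∘ₗ gAct p G M g := by
  ext x
  simp [gAct, smul_sub]

theorem range_starGamma_sub_id :
    range (starGamma p G M γ - LinearMap.id) =
      range (lcomp ℤ_[p] ℤ_[p] ((γ.toLinearMap - LinearMap.id).restrictScalars ℤ_[p])) := by
  let e : (M →ₗ[ℤ_[p]] ℤ_[p]) ≃ₗ[ℤ_[p]] M →ₗ[ℤ_[p]] ℤ_[p] :=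
    (γ.restrictScalars ℤ_[p]).arrowCongr (LinearEquiv.refl ℤ_[p] ℤ_[p])
  have hstar : starGamma p G M γ = e.toLinearMap := rfl
  have hlcomp : lcomp ℤ_[p] ℤ_[p] ((γ.toLinearMap - LinearMap.id).restrictScalars ℤ_[p]) =
      e.symm.toLinearMap - LinearMap.id := by
    ext; simp [e]
  rw [hstar, hlcomp, e.range_symm_sub_id]

end

theorem pontrjagin_dual_coinvariants_iso_coinvariants_of_dual_general
    (p : ℕ) [Fact p.Prime] (G : Type) [CommGroup G]
    (M : Type) [AddCommGroup M] [Module ℤ_[p] M]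
    [Module (MonoidAlgebra ℤ_[p] G) M] [IsScalarTower ℤ_[p] (MonoidAlgebra ℤ_[p] G) M]
    [Module.Free ℤ_[p] M] [Module.Finite ℤ_[p] M]
    (γ : M ≃ₗ[MonoidAlgebra ℤ_[p] G] M)
    (hfin : Finite (coinvOf p G M γ)) :
    ∃ e : (coinvOf p G M γ →ₗ[ℤ_[p]] PruferModule p) ≃ₗ[ℤ_[p]] dualCoinv p G M γ,
      ∀ (g : G) (f : coinvOf p G M γ →ₗ[ℤ_[p]] PruferModule p),
        e (f.comp (gActQ p G M γ g⁻¹)) = starGQ p G M γ g (e f) := by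
  let T : M →ₗ[ℤ_[p]] M := (γ.toLinearMap - LinearMap.id).restrictScalars ℤ_[p]
  have := hfin
  have hT : IsTorsion ℤ_[p] (coinvOf p G M γ) := Module.isTorsion_of_finite
  have hker : range (starGamma p G M γ - LinearMap.id) = ker (dualConnecting ℚ_[p] T hT) :=
    (range_starGamma_sub_id γ).trans (ker_dualConnecting ℚ_[p] T hT).symm
  let e : dualCoinv p G M γ ≃ₗ[ℤ_[p]] (coinvOf p G M γ →ₗ[ℤ_[p]] PruferModule p) :=
    (quotEquivOfEq _ _ hker).trans
      ((dualConnecting ℚ_[p] T hT).quotKerEquivOfSurjective (dualConnecting_surjective ℚ_[p] T hT))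
  refine ⟨e.symm, fun g f => ?_⟩
  obtain ⟨u, rfl⟩ := e.surjective f
  obtain ⟨φ, rfl⟩ := Submodule.Quotient.mk_surjective _ u
  rw [e.symm_apply_apply, LinearEquiv.symm_apply_eq]
  refine linearMap_qext _ (LinearMap.ext fun x => ?_)
  exact (dualConnecting_comp_mk ℚ_[p] T hT (gAct_comp_sub_id γ g⁻¹) φ x).symm

/-- Let `G` be a finite abelian group and `M` a `ℤ_p[G]`-module, free
of finite rank over `ℤ_p`, with a `ℤ_p[G]`-linear automorphism `γ` whose module of
coinvariants `M_Γ = M/(γ-1)M` is finite.  Then there is an isomorphism of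
`ℤ_p[G]`-modules `Hom_{ℤ_p}(M_Γ, ℚ_p/ℤ_p) ≅ (M*)_Γ`, where `M* = Hom_{ℤ_p}(M, ℤ_p)`
carries the contravariant `G`- and `γ`-actions and the Pontrjagin dual of `M_Γ`
carries the contravariant `G`-action `(g • f)(x) = f(g⁻¹ • x)`: i.e. a
`ℤ_p`-linear isomorphism commuting with the `G`-actions. -/
theorem pontrjagin_dual_coinvariants_iso_coinvariants_of_dual
    (p : ℕ) [Fact p.Prime] (G : Type) [CommGroup G] [Finite G]
    (M : Type) [AddCommGroup M] [Module ℤ_[p] M]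
    [Module (MonoidAlgebra ℤ_[p] G) M] [IsScalarTower ℤ_[p] (MonoidAlgebra ℤ_[p] G) M]
    [Module.Free ℤ_[p] M] [Module.Finite ℤ_[p] M]
    (γ : M ≃ₗ[MonoidAlgebra ℤ_[p] G] M)
    (hfin : Finite (coinvOf p G M γ)) :
    ∃ e : (coinvOf p G M γ →ₗ[ℤ_[p]] PruferModule p) ≃ₗ[ℤ_[p]] dualCoinv p G M γ,
      ∀ (g : G) (f : coinvOf p G M γ →ₗ[ℤ_[p]] PruferModule p),
        e (f.comp (gActQ p G M γ g⁻¹)) = starGQ p G M γ g (e f) :=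
  pontrjagin_dual_coinvariants_iso_coinvariants_of_dual_general p G M γ hfin
end

section
/- Let p be a prime, G a finite abelian group, R := ℤ_p[G], and Λ_R := R[[X]] the power series ring over R. Let M be a Λ_R-module which is free of finite rank as a ℤ_p-module and such that M/XM is finite. If M has projective dimension at most 1 as a Λ_R-module, then M/XM has projective dimension at most 1 as an R-module. -/
/-!
Multiplication by `X` on `M` is injective: it is `ℤ_p`-linear with finite cokernel, so its image
has full rank and its kernel has rank zero, hence vanishes as `M` is `ℤ_p`-torsion-free. Now take
`0 → K → F → M → 0` with `F` free and `K` projective over `Λ_R`, and reduce modulo `X`. Since `X`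
is injective on `M`, the sequence `0 → K/XK → F/XF → M/XM → 0` stays exact; `F/XF` is free over
`R`, and `K/XK` is projective over `R` because lifting problems for it become lifting problems for
`K` over `Λ_R` along `Λ_R → R`.
-/

/-- A module has projective dimension at most 1 iff some (equivalently, any)
surjection onto it from a free module has projective kernel. -/
def PdLeOne (R : Type) [Ring R] (M : Type) [AddCommGroup M] [Module R M] : Prop :=
  ∃ (ι : Type) (f : (ι →₀ R) →ₗ[R] M),
    Function.Surjective f ∧ Module.Projective R (LinearMap.ker f)

universe u

open PowerSeries

theorem LinearMap.injective_of_finite_quotient_range {A M : Type*} [CommRing A] [IsDomain A]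
    [CharZero A] [AddCommGroup M] [Module A M] [Module.Finite A M] [Module.IsTorsionFree A M]
    (T : M →ₗ[A] M) (hT : Finite (M ⧸ LinearMap.range T)) : Function.Injective T := by
  have hcoker : Module.rank A (M ⧸ LinearMap.range T) = 0 := by
    refine rank_eq_zero_iff.mpr fun x => ⟨Nat.card (M ⧸ LinearMap.range T),
      Nat.cast_ne_zero.mpr Nat.card_pos.ne', ?_⟩
    rw [Nat.cast_smul_eq_nsmul]
    exact card_nsmul_eq_zero'
  have hrange := (LinearMap.range T).rank_quotient_add_rank
  rw [hcoker, zero_add] at hrange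
  have hker : Module.rank A (LinearMap.ker T) = 0 := by
    have := T.rank_range_add_rank_ker
    rw [hrange, ← add_zero (Module.rank A M), add_assoc, zero_add] at this
    exact Cardinal.eq_of_add_eq_add_left this (Module.rank_lt_aleph0 A M)
  have : Subsingleton (LinearMap.ker T) := rank_zero_iff.mp hker
  exact LinearMap.ker_eq_bot.mp Submodule.eq_bot_of_subsingleton

theorem Module.Projective.of_semilinear_surjective {Λ P : Type*} {R Q : Type u} [Semiring Λ]
    [Ring R] [AddCommGroup P] [Module Λ P] [Module.Projective Λ P] [AddCommGroup Q] [Module R Q]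
    {φ : Λ →+* R} (hφ : Function.Surjective φ) (ψ : P →ₛₗ[φ] Q) (hψ : Function.Surjective ψ)
    (hker : ∀ x, ψ x = 0 → x ∈ (RingHom.ker φ) • (⊤ : Submodule Λ P)) :
    Module.Projective R Q := by
  refine Module.Projective.of_lifting_property fun {A B} _ _ _ _ e u he => ?_
  let _ : Module Λ A := Module.compHom A φ
  let _ : Module Λ B := Module.compHom B φ
  let eΛ : A →ₗ[Λ] B := { e.toAddMonoidHom with map_smul' := fun c x => e.map_smul (φ c) x }
  let uψ : P →ₗ[Λ] B :=
    { u.toAddMonoidHom.comp ψ.toAddMonoidHom with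
      map_smul' := fun c x => by
        change u (ψ (c • x)) = φ c • u (ψ x)
        rw [ψ.map_smulₛₗ, u.map_smul] }
  obtain ⟨h, hh⟩ := Module.projective_lifting_property eΛ uψ he
  -- `h` is `Λ`-linear into a module on which `ker φ` acts trivially, so it factors through `ψ`.
  have hvanish : ∀ x, ψ x = 0 → h x = 0 := fun x hx =>
    Submodule.smul_induction_on (p := fun x => h x = 0) (hker x hx)
      (fun c hc y _ => by
        rw [h.map_smul]
        change φ c • h y = 0
        rw [RingHom.mem_ker.mp hc, zero_smul])
      (fun x y hx hy => by rw [map_add, hx, hy, add_zero])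
  have hfactor : ∀ x y, ψ x = ψ y → h x = h y := fun x y hxy => by
    rw [← sub_eq_zero, ← map_sub, hvanish _ (by rw [map_sub, hxy, sub_self])]
  let s := Function.surjInv hψ
  have hs : ∀ q, ψ (s q) = q := Function.surjInv_eq hψ
  refine ⟨{ toFun := fun q => h (s q)
            map_add' := fun q q' => by
              rw [← map_add]
              apply hfactor
              simp [hs]
            map_smul' := fun r q => by
              obtain ⟨c, rfl⟩ := hφ r
              rw [RingHom.id_apply]
              exact (hfactor _ _ (by simp [hs, ψ.map_smulₛₗ])).trans (h.map_smul c (s q)) }, ?_⟩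
  ext q
  exact congr($hh (s q)).trans (congrArg u (hs q))

namespace PowerSeries

variable {R : Type*} [CommRing R]

noncomputable def constantCoeffₛₗ : R⟦X⟧ →ₛₗ[constantCoeff (R := R)] R where
  toFun := constantCoeff
  map_add' := map_add _
  map_smul' := map_mul _

theorem exists_finsupp_eq_const_add_X_smul {ι : Type*} (a : ι →₀ R⟦X⟧) :
    ∃ s : ι →₀ R⟦X⟧, a = Finsupp.mapRange.linearMap (Algebra.linearMap R R⟦X⟧)
      (Finsupp.mapRange.linearMap constantCoeffₛₗ a) + (X : R⟦X⟧) • s := by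
  refine ⟨Finsupp.mapRange (fun f => mk fun n => coeff (n + 1) f) (by ext; simp) a, ?_⟩
  ext i : 1
  simpa [constantCoeffₛₗ, add_comm] using eq_X_mul_shift_add_const (a i)

theorem isSMulRegular_X_of_finite_quotient {A M : Type*} [CommRing A] [IsDomain A]
    [CharZero A] [Algebra A R] [AddCommGroup M] [Module R⟦X⟧ M] [Module R M]
    [IsScalarTower R R⟦X⟧ M] [Module A M] [IsScalarTower A R M] [Module.Finite A M]
    [Module.IsTorsionFree A M]
    (hfin : Finite (M ⧸ (LinearMap.range
      ((X : R⟦X⟧) • (LinearMap.id : M →ₗ[R⟦X⟧] M))).restrictScalars R)) :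
    IsSMulRegular M (X : R⟦X⟧) := by
  have : IsScalarTower A R⟦X⟧ M := IsScalarTower.of_algebraMap_smul fun a m => by
    rw [IsScalarTower.algebraMap_apply A R R⟦X⟧, algebraMap_smul, algebraMap_smul]
  let T := ((X : R⟦X⟧) • (LinearMap.id : M →ₗ[R⟦X⟧] M)).restrictScalars A
  have : Finite (M ⧸ LinearMap.range T) := by
    rw [LinearMap.range_restrictScalars]
    exact .of_equiv _ ((Submodule.Quotient.restrictScalarsEquiv R _).toEquiv.trans
      (Submodule.Quotient.restrictScalarsEquiv A _).toEquiv.symm)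
  exact T.injective_of_finite_quotient_range this

end PowerSeries

theorem pdLeOne_quotient_X_of_isSMulRegular {R M : Type} [CommRing R] [AddCommGroup M]
    [Module R⟦X⟧ M] [Module R M] [IsScalarTower R R⟦X⟧ M] (hX : IsSMulRegular M (X : R⟦X⟧))
    (h : PdLeOne R⟦X⟧ M) :
    PdLeOne R (M ⧸ (LinearMap.range
      ((X : R⟦X⟧) • (LinearMap.id : M →ₗ[R⟦X⟧] M))).restrictScalars R) := by
  obtain ⟨ι, f, hf, hK⟩ := h
  set S := (LinearMap.range ((X : R⟦X⟧) • (LinearMap.id : M →ₗ[R⟦X⟧] M))).restrictScalars R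
  let c : (ι →₀ R) →ₗ[R] (ι →₀ R⟦X⟧) := Finsupp.mapRange.linearMap (Algebra.linearMap R R⟦X⟧)
  let π : (ι →₀ R⟦X⟧) →ₛₗ[constantCoeff (R := R)] (ι →₀ R) :=
    Finsupp.mapRange.linearMap constantCoeffₛₗ
  let g : (ι →₀ R) →ₗ[R] M ⧸ S := S.mkQ ∘ₗ f.restrictScalars R ∘ₗ c
  have hπc : ∀ y, π (c y) = y := fun y => by ext; simp [π, c, constantCoeffₛₗ]
  have hπX : ∀ a, π ((X : R⟦X⟧) • a) = 0 := fun a => by simp [π, LinearMap.map_smulₛₗ]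
  have hmkQ_X : ∀ m : M, S.mkQ ((X : R⟦X⟧) • m) = 0 := fun m =>
    (Submodule.Quotient.mk_eq_zero S).mpr ⟨m, rfl⟩
  have hgπ : ∀ a, g (π a) = S.mkQ (f a) := fun a => by
    obtain ⟨s, hs⟩ := exists_finsupp_eq_const_add_X_smul a
    conv_rhs => rw [hs, map_add, map_smul, map_add, hmkQ_X, add_zero]
    rfl
  refine ⟨ι, g, fun y => ?_, ?_⟩
  · obtain ⟨m, rfl⟩ := S.mkQ_surjective y
    obtain ⟨a, rfl⟩ := hf m
    exact ⟨π a, hgπ a⟩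
  let ψ : LinearMap.ker f →ₛₗ[constantCoeff (R := R)] LinearMap.ker g :=
    (π.domRestrict _).codRestrict _ fun k => by simp [hgπ]
  refine Module.Projective.of_semilinear_surjective (P := LinearMap.ker f) (Q := LinearMap.ker g)
    constantCoeff_surj ψ ?_ ?_
  · rintro ⟨y, hy⟩
    obtain ⟨m, hm⟩ : f (c y) ∈ LinearMap.range ((X : R⟦X⟧) • LinearMap.id) :=
      (Submodule.Quotient.mk_eq_zero S).mp hy
    obtain ⟨b, rfl⟩ := hf m
    refine ⟨⟨c y - (X : R⟦X⟧) • b, by simp [← hm]⟩, Subtype.ext ?_⟩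
    change π (c y - (X : R⟦X⟧) • b) = y
    rw [map_sub, hπc, hπX, sub_zero]
  · rintro ⟨k, hk⟩ hψk
    obtain ⟨s, hs⟩ := exists_finsupp_eq_const_add_X_smul k
    rw [show π k = 0 from congrArg Subtype.val hψk, map_zero, zero_add] at hs
    have hfs : f s = 0 := hX.right_eq_zero_of_smul (by rw [← map_smul, ← hs, hk])
    rw [show (⟨k, hk⟩ : LinearMap.ker f) = (X : R⟦X⟧) • ⟨s, hfs⟩ from Subtype.ext hs]
    exact Submodule.smul_mem_smul (RingHom.mem_ker.mpr constantCoeff_X) trivial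

theorem pdLeOne_coinvariants_of_pdLeOne_general
    (p : ℕ) [Fact p.Prime] (G : Type) [CommGroup G]
    (M : Type) [AddCommGroup M]
    [Module (PowerSeries (MonoidAlgebra ℤ_[p] G)) M]
    [Module (MonoidAlgebra ℤ_[p] G) M]
    [IsScalarTower (MonoidAlgebra ℤ_[p] G) (PowerSeries (MonoidAlgebra ℤ_[p] G)) M]
    [Module ℤ_[p] M] [IsScalarTower ℤ_[p] (MonoidAlgebra ℤ_[p] G) M]
    [Module.Free ℤ_[p] M] [Module.Finite ℤ_[p] M]
    (hfin : Finite
      (M ⧸ (LinearMap.range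
        ((PowerSeries.X : PowerSeries (MonoidAlgebra ℤ_[p] G)) •
          (LinearMap.id : M →ₗ[PowerSeries (MonoidAlgebra ℤ_[p] G)] M))).restrictScalars
        (MonoidAlgebra ℤ_[p] G)))
    (h1 : PdLeOne (PowerSeries (MonoidAlgebra ℤ_[p] G)) M) :
    PdLeOne (MonoidAlgebra ℤ_[p] G)
      (M ⧸ (LinearMap.range
        ((PowerSeries.X : PowerSeries (MonoidAlgebra ℤ_[p] G)) •
          (LinearMap.id : M →ₗ[PowerSeries (MonoidAlgebra ℤ_[p] G)] M))).restrictScalars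
        (MonoidAlgebra ℤ_[p] G)) :=
  pdLeOne_quotient_X_of_isSMulRegular (isSMulRegular_X_of_finite_quotient (A := ℤ_[p]) hfin) h1

/-- Let `G` be a finite abelian group, `R = ℤ_p[G]`, `Λ_R = R[[X]]`,
and `M` a `Λ_R`-module which is free of finite rank over `ℤ_p` and whose module of
`Γ`-coinvariants `M/XM` is finite.  If `M` has projective dimension at most 1 over
`Λ_R`, then `M/XM` has projective dimension at most 1 over `R`. -/
theorem pdLeOne_coinvariants_of_pdLeOne
    (p : ℕ) [Fact p.Prime] (G : Type) [CommGroup G] [Finite G]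
    (M : Type) [AddCommGroup M]
    [Module (PowerSeries (MonoidAlgebra ℤ_[p] G)) M]
    [Module (MonoidAlgebra ℤ_[p] G) M]
    [IsScalarTower (MonoidAlgebra ℤ_[p] G) (PowerSeries (MonoidAlgebra ℤ_[p] G)) M]
    [Module ℤ_[p] M] [IsScalarTower ℤ_[p] (MonoidAlgebra ℤ_[p] G) M]
    [Module.Free ℤ_[p] M] [Module.Finite ℤ_[p] M]
    (hfin : Finite
      (M ⧸ (LinearMap.range
        ((PowerSeries.X : PowerSeries (MonoidAlgebra ℤ_[p] G)) •
          (LinearMap.id : M →ₗ[PowerSeries (MonoidAlgebra ℤ_[p] G)] M))).restrictScalars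
        (MonoidAlgebra ℤ_[p] G)))
    (h1 : PdLeOne (PowerSeries (MonoidAlgebra ℤ_[p] G)) M) :
    PdLeOne (MonoidAlgebra ℤ_[p] G)
      (M ⧸ (LinearMap.range
        ((PowerSeries.X : PowerSeries (MonoidAlgebra ℤ_[p] G)) •
          (LinearMap.id : M →ₗ[PowerSeries (MonoidAlgebra ℤ_[p] G)] M))).restrictScalars
        (MonoidAlgebra ℤ_[p] G)) :=
  pdLeOne_coinvariants_of_pdLeOne_general p G M hfin h1
end

section
/- Let p be a prime, G a finite abelian group, and O the ring of integers in a finite extension of ℚ_p containing the values of all ℂ_p-valued irreducible characters of G. Then: (a) an element f ∈ O[G] is a non-zero-divisor if and only if χ(f) ≠ 0 for every character χ of G, where χ denotes the induced O-algebra homomorphism O[G] → O; and (b) an element f ∈ O[G][[t]] is a non-zero-divisor if and only if χ(f) ≠ 0 in O[[t]] for every character χ of G, where χ denotes the induced O[[t]]-algebra homomorphism O[G][[t]] → O[[t]]. -/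
/-!
For a character `ψ`, the element `e_ψ = ∑ g, ψ(g⁻¹) g` of `R[G]` satisfies `e_ψ f = ψ(f) e_ψ`,
so if `ψ(f) = 0` the nonzero `e_ψ` (or the constant series `e_ψ`) annihilates `f`.
Conversely, when `R` is a domain with enough roots of unity the characters jointly detect zero
in `R[G]`: this is Dedekind's independence of characters applied to the evaluations
`ψ ↦ ψ g`, which are distinct because characters separate the points of `G`. Since `R` and
`R[[t]]` are domains, `x f = 0` then forces `ψ(x) = 0` for every `ψ`, hence `x = 0`.
-/

open nonZeroDivisors

section NonZeroDivisors

variable {ι A B : Type*} [CommSemiring A] [Semiring B]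

theorem mem_nonZeroDivisors_of_forall_ne_zero [NoZeroDivisors B] {φ : ι → A →+* B}
    (hφ : ∀ a, (∀ i, φ i a = 0) → a = 0) {f : A} (hf : ∀ i, φ i f ≠ 0) : f ∈ A⁰ :=
  mem_nonZeroDivisors_iff_right.mpr fun x hx ↦ hφ x fun i ↦
    (mul_eq_zero.mp (by rw [← map_mul, hx, map_zero])).resolve_right (hf i)

theorem PowerSeries.eq_zero_of_forall_map_eq_zero {φ : ι → A →+* B}
    (hφ : ∀ a, (∀ i, φ i a = 0) → a = 0) {f : PowerSeries A} (hf : ∀ i, map (φ i) f = 0) :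
    f = 0 :=
  ext fun n ↦ hφ _ fun i ↦ by simpa using congr(coeff n $(hf i))

end NonZeroDivisors

theorem MonoidHom.eval_injective_of_hasEnoughRootsOfUnity {G M : Type*} [CommGroup G] [Finite G]
    [CommMonoid M] [HasEnoughRootsOfUnity M (Monoid.exponent G)] :
    Function.Injective (MonoidHom.eval : G →* (G →* M) →* M) := by
  intro g g' h
  refine (CommGroup.forall_apply_eq_apply_iff G (M := M)).mp fun φ ↦ Units.ext ?_
  exact DFunLike.congr_fun h ((Units.coeHom M).comp φ)

namespace MonoidAlgebra

variable {R G : Type*} [CommRing R]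

theorem eq_zero_of_forall_lift_eq_zero [IsDomain R] [CommGroup G] [Finite G]
    [HasEnoughRootsOfUnity R (Monoid.exponent G)] {f : R[G]}
    (hf : ∀ ψ : G →* R, lift R R G ψ f = 0) : f = 0 := by
  have hind : LinearIndependent R fun g : G ↦ ⇑(MonoidHom.eval g : (G →* R) →* R) :=
    (linearIndependent_monoidHom (G →* R) R).comp _
      MonoidHom.eval_injective_of_hasEnoughRootsOfUnity
  refine coeff_eq_zero.mp (linearIndependent_iff.mp hind f.coeff (funext fun ψ ↦ ?_))
  simpa [Finsupp.linearCombination_apply, Finsupp.sum, lift_apply] using hf ψ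

section CharSum

variable [Group G] [Fintype G]

noncomputable def charSum (ψ : G →* R) : R[G] :=
  ∑ g, single g (ψ g⁻¹)

theorem charSum_mul (ψ : G →* R) (f : R[G]) : charSum ψ * f = lift R R G ψ f • charSum ψ := by
  induction f using induction_linear with
  | zero => simp
  | add x y hx hy => rw [mul_add, hx, hy, map_add, add_smul]
  | single g a =>
    have hψ : ψ g * ψ g⁻¹ = 1 := by rw [← map_mul, mul_inv_cancel, map_one]
    rw [charSum, Finset.sum_mul, lift_single, Finset.smul_sum]
    refine Fintype.sum_equiv (Equiv.mulRight g) _ _ fun h ↦ ?_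
    simp only [Equiv.coe_mulRight, single_mul_single, smul_single', smul_eq_mul, mul_inv_rev,
      map_mul]
    congr 1
    linear_combination (-(a * ψ h⁻¹)) * hψ

theorem charSum_ne_zero [Nontrivial R] (ψ : G →* R) : charSum ψ ≠ 0 := by
  classical
  intro h
  have := congr(($h).coeff 1)
  simp [charSum, coeff_sum, Finsupp.finsetSum_apply, coeff_single, Finsupp.single_apply] at this

end CharSum

theorem mem_nonZeroDivisors_iff_forall_lift_ne_zero [IsDomain R] [CommGroup G] [Finite G]
    [HasEnoughRootsOfUnity R (Monoid.exponent G)] {f : R[G]} :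
    f ∈ R[G]⁰ ↔ ∀ ψ : G →* R, lift R R G ψ f ≠ 0 := by
  have := Fintype.ofFinite G
  refine ⟨fun hf ψ hψ ↦ charSum_ne_zero ψ ?_,
    mem_nonZeroDivisors_of_forall_ne_zero (φ := fun ψ ↦ (lift R R G ψ).toRingHom)
      fun _ ↦ eq_zero_of_forall_lift_eq_zero⟩
  exact mem_nonZeroDivisors_iff_right.mp hf _ (by rw [charSum_mul, hψ, zero_smul])

end MonoidAlgebra

open MonoidAlgebra in
theorem PowerSeries.mem_nonZeroDivisors_iff_forall_map_lift_ne_zero {R G : Type*} [CommRing R]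
    [IsDomain R] [CommGroup G] [Finite G] [HasEnoughRootsOfUnity R (Monoid.exponent G)]
    {f : PowerSeries R[G]} :
    f ∈ (PowerSeries R[G])⁰ ↔ ∀ ψ : G →* R, map (lift R R G ψ).toRingHom f ≠ 0 := by
  have := Fintype.ofFinite G
  refine ⟨fun hf ψ hψ ↦ charSum_ne_zero ψ ?_,
    mem_nonZeroDivisors_of_forall_ne_zero
      fun _ ↦ eq_zero_of_forall_map_eq_zero fun _ ↦ eq_zero_of_forall_lift_eq_zero⟩
  have hC : C (charSum ψ) * f = 0 := ext fun n ↦ by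
    have hcoeff : lift R R G ψ (coeff n f) = 0 := by simpa using congr(coeff n $hψ)
    rw [coeff_C_mul, charSum_mul, hcoeff, zero_smul, map_zero]
  simpa using congr(coeff 0 $(mem_nonZeroDivisors_iff_right.mp hf _ hC))

theorem mem_nonZeroDivisors_iff_characters_ne_zero_general
    (p : ℕ) [Fact p.Prime] (G : Type) [CommGroup G] [Finite G]
    (K : Type) [Field K] [Algebra ℤ_[p] K]
    (hζ : ∃ ζ : integralClosure ℤ_[p] K, IsPrimitiveRoot ζ (Monoid.exponent G)) :
    (∀ f : MonoidAlgebra (integralClosure ℤ_[p] K) G,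
      f ∈ nonZeroDivisors (MonoidAlgebra (integralClosure ℤ_[p] K) G) ↔
      ∀ χ : MonoidAlgebra (integralClosure ℤ_[p] K) G →ₐ[integralClosure ℤ_[p] K]
            integralClosure ℤ_[p] K, χ f ≠ 0) ∧
    (∀ f : PowerSeries (MonoidAlgebra (integralClosure ℤ_[p] K) G),
      f ∈ nonZeroDivisors (PowerSeries (MonoidAlgebra (integralClosure ℤ_[p] K) G)) ↔
      ∀ χ : MonoidAlgebra (integralClosure ℤ_[p] K) G →ₐ[integralClosure ℤ_[p] K]
            integralClosure ℤ_[p] K,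
        PowerSeries.map χ.toRingHom f ≠ 0) := by
  let O := integralClosure ℤ_[p] K
  have : HasEnoughRootsOfUnity O (Monoid.exponent G) := ⟨hζ, rootsOfUnity.isCyclic _ _⟩
  exact ⟨fun f ↦ MonoidAlgebra.mem_nonZeroDivisors_iff_forall_lift_ne_zero.trans
      ((MonoidAlgebra.lift O O G).forall_congr_right (q := fun χ ↦ χ f ≠ 0)),
    fun f ↦ PowerSeries.mem_nonZeroDivisors_iff_forall_map_lift_ne_zero.trans
      ((MonoidAlgebra.lift O O G).forall_congr_right
        (q := fun χ ↦ PowerSeries.map χ.toRingHom f ≠ 0))⟩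

/-- Let `G` be a finite abelian group and `O` the ring of integers of a
finite extension `K` of `ℚ_p` containing the values of all `ℂ_p`-valued irreducible
characters of `G` (equivalently, a primitive root of unity of order the exponent of
`G`).  Then (a) `f ∈ O[G]` is a non-zero-divisor iff `χ(f) ≠ 0` for every character
`χ` (i.e. every `O`-algebra homomorphism `O[G] → O`), and (b) `f ∈ O[G][[t]]` is a
non-zero-divisor iff `χ(f) ≠ 0` in `O[[t]]` for every character `χ`. -/
theorem mem_nonZeroDivisors_iff_characters_ne_zero
    (p : ℕ) [Fact p.Prime] (G : Type) [CommGroup G] [Finite G]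
    (K : Type) [Field K] [Algebra ℚ_[p] K] [FiniteDimensional ℚ_[p] K]
    [Algebra ℤ_[p] K] [IsScalarTower ℤ_[p] ℚ_[p] K]
    (hζ : ∃ ζ : integralClosure ℤ_[p] K, IsPrimitiveRoot ζ (Monoid.exponent G)) :
    (∀ f : MonoidAlgebra (integralClosure ℤ_[p] K) G,
      f ∈ nonZeroDivisors (MonoidAlgebra (integralClosure ℤ_[p] K) G) ↔
      ∀ χ : MonoidAlgebra (integralClosure ℤ_[p] K) G →ₐ[integralClosure ℤ_[p] K]
            integralClosure ℤ_[p] K, χ f ≠ 0) ∧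
    (∀ f : PowerSeries (MonoidAlgebra (integralClosure ℤ_[p] K) G),
      f ∈ nonZeroDivisors (PowerSeries (MonoidAlgebra (integralClosure ℤ_[p] K) G)) ↔
      ∀ χ : MonoidAlgebra (integralClosure ℤ_[p] K) G →ₐ[integralClosure ℤ_[p] K]
            integralClosure ℤ_[p] K,
        PowerSeries.map χ.toRingHom f ≠ 0) :=
  mem_nonZeroDivisors_iff_characters_ne_zero_general p G K hζ
end

section
/- Let p be a prime, G a finite abelian group, g ∈ G, and N an integer with |N| ≥ 2. Then the element 1 − N·g is a non-zero-divisor in the group ring ℤ_p[G]. -/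
/-!
If `m` is the order of `g`, then `(1 - N g) * ∑_{i<m} (N g)^i = 1 - N^m`, a scalar. Since
`|N| ≥ 2` forces `N^m ≠ 1`, this scalar is a nonzero element of the domain `ℤ_[p]`, hence acts
injectively on the free module `ℤ_[p][G]`; so `1 - N g` divides a non-zero-divisor and is
itself one.
-/

open nonZeroDivisors

theorem one_sub_mem_nonZeroDivisors_of_one_sub_pow {A : Type*} [Ring A] {x : A} {n : ℕ}
    (h : 1 - x ^ n ∈ A⁰) : 1 - x ∈ A⁰ := by
  constructor
  · intro f hf
    refine h.1 f ?_
    rw [← geom_sum_mul_neg, mul_assoc, hf, mul_zero]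
  · intro f hf
    refine h.2 f ?_
    rw [← mul_neg_geom_sum, ← mul_assoc, hf, zero_mul]

theorem pow_ne_one_of_one_lt_abs {R : Type*} [Ring R] [LinearOrder R] [IsStrictOrderedRing R]
    {a : R} (ha : 1 < |a|) {n : ℕ} (hn : n ≠ 0) : a ^ n ≠ 1 := by
  intro h
  simpa [← abs_pow, h] using one_lt_pow₀ ha hn

namespace MonoidAlgebra

theorem algebraMap_mem_nonZeroDivisors {R G : Type*} [CommSemiring R] [Monoid G] {c : R}
    (hc : c ∈ R⁰) : algebraMap R (MonoidAlgebra R G) c ∈ (MonoidAlgebra R G)⁰ := by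
  have smul_injective (f : MonoidAlgebra R G) (hf : c • f = 0) : f = 0 := by
    ext a
    exact hc.1 _ (by simpa using congr(($hf).coeff a))
  refine ⟨fun f hf => smul_injective f ?_, fun f hf => smul_injective f ?_⟩
  · rwa [Algebra.smul_def]
  · rwa [Algebra.smul_def, Algebra.commutes]

theorem single_pow_orderOf {R G : Type*} [CommSemiring R] [Monoid G] (g : G) (r : R) :
    single g r ^ orderOf g = algebraMap R (MonoidAlgebra R G) (r ^ orderOf g) := by
  rw [single_pow, pow_orderOf_eq_one]
  rfl

end MonoidAlgebra

/-- For a finite abelian group `G`, `g ∈ G` and an integer `N` with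
`|N| ≥ 2`, the element `1 - N·g` is a non-zero-divisor in `ℤ_p[G]`. -/
theorem one_sub_int_smul_group_elem_mem_nonZeroDivisors
    (p : ℕ) [Fact p.Prime] (G : Type) [CommGroup G] [Finite G]
    (g : G) (N : ℤ) (hN : 2 ≤ |N|) :
    (1 - MonoidAlgebra.single g (N : ℤ_[p]) : MonoidAlgebra ℤ_[p] G) ∈
      nonZeroDivisors (MonoidAlgebra ℤ_[p] G) := by
  have hNm : (N : ℤ_[p]) ^ orderOf g ≠ 1 := by
    exact_mod_cast pow_ne_one_of_one_lt_abs (a := N) (by omega) (orderOf_pos g).ne'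
  apply one_sub_mem_nonZeroDivisors_of_one_sub_pow (n := orderOf g)
  rw [MonoidAlgebra.single_pow_orderOf, ← map_one (algebraMap ℤ_[p] _), ← map_sub]
  exact MonoidAlgebra.algebraMap_mem_nonZeroDivisors
    (mem_nonZeroDivisors_of_ne_zero (sub_ne_zero.mpr hNm.symm))
end
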